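/- If an almost Toeplitz matrix T = T₀ + Σ_{k=−m}^{n} α_k c^{(k)} (T₀ finitary, α_{−m}, α_n ≠ 0, m,n ≥ 0) lies in E₀, is invertible, and T⁻¹ is also almost Toeplitz, then m = n = 0; that is, T = α·Id + T₀ with 0 ≠ α ∈ F and T₀ finitary. -/

import Mathlib

noncomputable section

/-- The algebra `E` of column-finite `ℕ × ℕ` matrices over `F`, realized as the
algebra of all `F`-linear endomorphisms of the free module `⊕_{i ∈ ℕ} F eᵢ`. -/
abbrev EMat (F : Type*) [Field F] := Module.End F (ℕ →₀ F)

/-- The `(i,j)` entry of (the matrix of) an endomorphism `f`. -/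
def entry {F : Type*} [Field F] (f : EMat F) (i j : ℕ) : F :=
  f (Finsupp.single j 1) i

/-- `f` has finitely many nonzero entries in each row. Together with the
automatic column-finiteness this says `f` lies in `E₀`. -/
def RowFinite {F : Type*} [Field F] (f : EMat F) : Prop :=
  ∀ i : ℕ, {j : ℕ | entry f i j ≠ 0}.Finite

/-- `M_∞(F)`: the nonunital algebra of finitary matrices (finitely many
nonzero entries overall), i.e. endomorphisms killing all but finitely many
basis vectors. -/
def Mfin (F : Type*) [Field F] : NonUnitalSubalgebra F (EMat F) where
  carrier := {f | {j : ℕ | f (Finsupp.single j 1) ≠ 0}.Finite}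
  zero_mem' := by
    simp
  add_mem' := by
    intro a b ha hb
    refine ((ha.union hb).subset ?_)
    intro j hj
    simp only [Set.mem_setOf_eq, LinearMap.add_apply] at hj ⊢
    by_contra h
    try push_neg at h
    simp only [Set.mem_union, Set.mem_setOf_eq, not_or, not_not, ne_eq] at h
    rw [h.1, h.2, add_zero] at hj
    exact hj rfl
  mul_mem' := by
    intro a b ha hb
    refine hb.subset ?_
    intro j hj
    simp only [Set.mem_setOf_eq] at hj ⊢
    intro h
    apply hj
    show a (b (Finsupp.single j 1)) = 0
    rw [h]
    simp
  smul_mem' := by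
    intro c a ha
    refine ha.subset ?_
    intro j hj
    simp only [Set.mem_setOf_eq, LinearMap.smul_apply] at hj ⊢
    intro h
    rw [h] at hj
    simp at hj

instance (F : Type*) [Field F] : NonUnitalRing (Mfin F) :=
  NonUnitalSubalgebra.toNonUnitalRing (R := F) (A := EMat F) (Mfin F)

/-- The shift `c = Σ_{i} e_{i+1,i}` (sends basis vector `eᵢ` to `e_{i+1}`). -/
def cSh (F : Type*) [Field F] : EMat F :=
  Finsupp.lsum F fun i => Finsupp.lsingle (i + 1)

/-- The shift `c* = Σ_{i} e_{i,i+1}` (sends `e_{i+1}` to `eᵢ` and `e₀` to `0`). -/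
def cShStar (F : Type*) [Field F] : EMat F :=
  Finsupp.lsum F fun i => if i = 0 then 0 else Finsupp.lsingle (i - 1)



/-- The diagonal matrix `c^{(k)} = Σ_{j−i=k} e_{ij}` (sends `e_j` to `e_{j−k}`
when `j ≥ k`, and to `0` otherwise). -/
def diagMat (F : Type*) [Field F] (k : ℤ) : EMat F :=
  Finsupp.lsum F fun j => if k ≤ (j : ℤ) then Finsupp.lsingle (((j : ℤ) - k).toNat) else 0

/-! Beyond the finitely many columns on which `T₀` and `S₀` live, `T` and `S` act on basis vectors
as multiplication by the Laurent polynomials `Σ α_k X^{-k}` and `Σ β_l X^{-l}`. So for `J` large the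
column `T S e_J = e_J` has the entry `β_{-p} α_{-m} ≠ 0` in row `J + m + p` and `β_q α_n ≠ 0` in row
`J - q - n`, each of these rows being reached by a single pair of extreme diagonals. Both rows must
then be `J`, whence `m + p = 0` and `q + n = 0`. -/

open Filter

theorem sum_sum_ite_add_eq_mul {ι R : Type*} [Add ι] [DecidableEq ι]
    [NonUnitalNonAssocSemiring R] {s t : Finset ι} (f g : ι → R) {e l₀ k₀ : ι}
    (hl₀ : l₀ ∈ t) (hk₀ : k₀ ∈ s) (he : ∀ l ∈ t, ∀ k ∈ s, l + k = e → l = l₀ ∧ k = k₀)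
    (h₀ : l₀ + k₀ = e) :
    ∑ l ∈ t, ∑ k ∈ s, (if l + k = e then g l * f k else 0) = g l₀ * f k₀ := by
  rw [Finset.sum_eq_single_of_mem l₀ hl₀, Finset.sum_eq_single_of_mem k₀ hk₀, if_pos h₀]
  · exact fun k hk hne => if_neg fun h => hne (he l₀ hl₀ k hk h).2
  · exact fun l hl hne => Finset.sum_eq_zero fun k hk => if_neg fun h => hne (he l hl k hk h).1

section

variable {F : Type*} [Field F]

theorem diagMat_single (k : ℤ) (j : ℕ) :
    diagMat F k (Finsupp.single j 1) =
      if k ≤ j then Finsupp.single ((j : ℤ) - k).toNat 1 else 0 := by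
  unfold diagMat
  rw [Finsupp.lsum_single]
  split_ifs <;> simp

theorem eventually_apply_single_eq_zero_of_mem_Mfin {f : EMat F} (hf : f ∈ Mfin F) :
    ∀ᶠ j in atTop, f (Finsupp.single j 1) = 0 := by
  rw [← Nat.cofinite_eq_atTop]
  simpa using Set.Finite.eventually_cofinite_notMem hf

theorem add_sum_smul_diagMat_single {f₀ : EMat F} {s : Finset ℤ} (α : ℤ → F) {j : ℕ}
    (h₀ : f₀ (Finsupp.single j 1) = 0) (hs : ∀ k ∈ s, k ≤ j) :
    (f₀ + ∑ k ∈ s, α k • diagMat F k) (Finsupp.single j 1) =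
      ∑ k ∈ s, α k • Finsupp.single ((j : ℤ) - k).toNat 1 := by
  simp only [LinearMap.add_apply, LinearMap.sum_apply, LinearMap.smul_apply, h₀, zero_add]
  exact Finset.sum_congr rfl fun k hk => by rw [diagMat_single, if_pos (hs k hk)]

theorem add_sum_smul_diagMat_mul_single_apply {f₀ g₀ : EMat F} {s t : Finset ℤ} (α β : ℤ → F)
    {J : ℕ} (hg₀ : g₀ (Finsupp.single J 1) = 0)
    (hf₀ : ∀ l ∈ t, f₀ (Finsupp.single ((J : ℤ) - l).toNat 1) = 0)
    (ht : ∀ l ∈ t, l ≤ J) (hst : ∀ l ∈ t, ∀ k ∈ s, l + k ≤ J) (i : ℕ) :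
    ((f₀ + ∑ k ∈ s, α k • diagMat F k) * (g₀ + ∑ l ∈ t, β l • diagMat F l))
        (Finsupp.single J 1) i =
      ∑ l ∈ t, ∑ k ∈ s, if l + k = J - i then β l * α k else 0 := by
  rw [Module.End.mul_apply, add_sum_smul_diagMat_single β hg₀ ht]
  simp only [map_sum, map_smul, Finsupp.finsetSum_apply, Finsupp.smul_apply]
  refine Finset.sum_congr rfl fun l hl => ?_
  rw [add_sum_smul_diagMat_single α (hf₀ l hl) (fun k hk => by have := hst l hl k hk; omega)]
  simp only [Finsupp.finsetSum_apply, Finsupp.smul_apply, Finsupp.single_apply, Finset.smul_sum]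
  refine Finset.sum_congr rfl fun k hk => ?_
  have := hst l hl k hk
  have := ht l hl
  by_cases h : l + k = J - i
  · rw [if_pos h, if_pos (by omega), smul_eq_mul, smul_eq_mul, mul_one]
  · rw [if_neg h, if_neg (by omega), smul_zero, smul_zero]

end

theorem almost_toeplitz_invertible_general (F : Type*) [Field F]
    (T S T₀ S₀ : EMat F) (m n p q : ℕ) (α β : ℤ → F)
    (hT : T = T₀ + ∑ k ∈ Finset.Icc (-(m : ℤ)) (n : ℤ), α k • diagMat F k)
    (hT₀ : T₀ ∈ Mfin F) (hαm : α (-(m : ℤ)) ≠ 0) (hαn : α (n : ℤ) ≠ 0)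
    (hS : S = S₀ + ∑ k ∈ Finset.Icc (-(p : ℤ)) (q : ℤ), β k • diagMat F k)
    (hS₀ : S₀ ∈ Mfin F) (hβp : β (-(p : ℤ)) ≠ 0) (hβq : β (q : ℤ) ≠ 0)
    (hTS : T * S = 1) :
    m = 0 ∧ n = 0 := by
  obtain ⟨N, hN⟩ := ((eventually_apply_single_eq_zero_of_mem_Mfin hT₀).and
    (eventually_apply_single_eq_zero_of_mem_Mfin hS₀)).exists_forall_of_atTop
  have hcol : ∀ i : ℕ, Finsupp.single (N + q + n) (1 : F) i =
      ∑ l ∈ Finset.Icc (-(p : ℤ)) q, ∑ k ∈ Finset.Icc (-(m : ℤ)) n,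
        if l + k = ((N + q + n : ℕ) : ℤ) - i then β l * α k else 0 := by
    intro i
    have h := add_sum_smul_diagMat_mul_single_apply (f₀ := T₀) (s := Finset.Icc (-(m : ℤ)) n)
      (t := Finset.Icc (-(p : ℤ)) q) α β (hN (N + q + n) (by omega)).2 ?_ ?_ ?_ i
    · rwa [← hT, ← hS, hTS] at h
    all_goals intro l hl; simp only [Finset.mem_Icc] at hl
    · exact (hN _ (by omega)).1
    · omega
    · intro k hk; simp only [Finset.mem_Icc] at hk; omega
  have htop := hcol (N + q + n + m + p)
  rw [sum_sum_ite_add_eq_mul α β (l₀ := -p) (k₀ := -m) (by simp) (by simp)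
    (by intro l hl k hk; simp only [Finset.mem_Icc] at hl hk; omega) (by push_cast; ring)] at htop
  have hbot := hcol N
  rw [sum_sum_ite_add_eq_mul α β (l₀ := q) (k₀ := n) (by simp) (by simp)
    (by intro l hl k hk; simp only [Finset.mem_Icc] at hl hk; omega) (by push_cast; ring)] at hbot
  have htopJ := (Finsupp.single_apply_ne_zero.mp (htop ▸ mul_ne_zero hβp hαm)).1
  have hbotJ := (Finsupp.single_apply_ne_zero.mp (hbot ▸ mul_ne_zero hβq hαn)).1
  omega

/-- If an almost Toeplitz matrix `T = T₀ + Σ_{k=−m}^n α_k c^{(k)}` (with `T₀`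
finitary, `α_{−m}, α_n ≠ 0`) lies in `E₀`, is invertible, and its inverse is
also almost Toeplitz, then `m = n = 0`; that is, `T = α·Id + T₀` with
`α = α₀ ≠ 0`. -/
theorem almost_toeplitz_invertible (F : Type*) [Field F]
    (T S T₀ S₀ : EMat F) (m n p q : ℕ) (α β : ℤ → F)
    (hT : T = T₀ + ∑ k ∈ Finset.Icc (-(m : ℤ)) (n : ℤ), α k • diagMat F k)
    (hT₀ : T₀ ∈ Mfin F) (hαm : α (-(m : ℤ)) ≠ 0) (hαn : α (n : ℤ) ≠ 0)
    (hTrow : RowFinite T)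
    (hS : S = S₀ + ∑ k ∈ Finset.Icc (-(p : ℤ)) (q : ℤ), β k • diagMat F k)
    (hS₀ : S₀ ∈ Mfin F) (hβp : β (-(p : ℤ)) ≠ 0) (hβq : β (q : ℤ) ≠ 0)
    (hTS : T * S = 1) (hST : S * T = 1) :
    m = 0 ∧ n = 0 :=
  almost_toeplitz_invertible_general F T S T₀ S₀ m n p q α β hT hT₀ hαm hαn hS hS₀ hβp hβq hTS

end
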